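/- With the two-bridge setup over ℂ[u] and p ≥ 3, the polynomials W₁₁ and φ_W in ℂ[u] both have degree (p−1)/2, and the leading coefficient of each lies in {1, −1}; moreover W₁₁ and φ_W have the same leading coefficient. -/

import Mathlib

open Matrix Polynomial

/-- `ε_i = (−1)^⌊iq/p⌋`. -/
def eps (p : ℕ) (q : ℤ) (i : ℕ) : ℤ :=
  if ((i : ℤ) * q).fdiv p % 2 = 0 then 1 else -1

/-- `G₁ = [[d, 1], [0, d⁻¹]]` over `ℂ[u]`. -/
noncomputable def G1 (d : ℂ) : Matrix (Fin 2) (Fin 2) (Polynomial ℂ) :=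
  !![C d, 1; 0, C d⁻¹]

/-- `G₂ = [[d, 0], [−u, d⁻¹]]` over `ℂ[u]`. -/
noncomputable def G2 (d : ℂ) : Matrix (Fin 2) (Fin 2) (Polynomial ℂ) :=
  !![C d, 0; -X, C d⁻¹]

/-- `W = G₁^{ε₁}·G₂^{ε₂}·⋯·G₁^{ε_{p−2}}·G₂^{ε_{p−1}}`. -/
noncomputable def twoBridgeW (p : ℕ) (q : ℤ) (d : ℂ) :
    Matrix (Fin 2) (Fin 2) (Polynomial ℂ) :=
  ((List.range (p - 1)).map
    (fun i => (if (i + 1) % 2 = 1 then G1 d else G2 d) ^ eps p q (i + 1))).prod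

/-- The Riley polynomial `φ_W = W₁₁ − (d − d⁻¹)W₁₂`. -/
noncomputable def rileyPoly (p : ℕ) (q : ℤ) (d : ℂ) : Polynomial ℂ :=
  twoBridgeW p q d 0 0 - C (d - d⁻¹) * twoBridgeW p q d 0 1

/-!
Group the factors of `W` into the `(p - 1)/2` pairs `G₁^a G₂^b` with `a, b = ±1`. Such a pair is
`[[d^(a+b) - ab·u, a·d^(-b)], [-b·d^(-a)·u, d^(-a-b)]]`: its left column is linear in `u`, its
right column constant, and its corner entry has leading coefficient `-ab = ±1`. Multiplying on
the right by such a matrix turns a first row `(s·u^k + ⋯, deg < k)` into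
`(st·u^(k+1) + ⋯, deg < k+1)`, so `W₁₁ = ±u^((p-1)/2) + ⋯` while `W₁₂` has smaller degree and
cannot affect the leading term of `φ_W`.
-/

lemma List.prod_eq_one_or_neg_one {M : Type*} [Monoid M] [HasDistribNeg M] {l : List M}
    (h : ∀ x ∈ l, x = 1 ∨ x = -1) : l.prod = 1 ∨ l.prod = -1 := by
  induction l with
  | nil => simp
  | cons a l ih =>
    rw [List.prod_cons]
    rcases h a List.mem_cons_self with rfl | rfl <;>
      rcases ih fun x hx => h x (List.mem_cons_of_mem _ hx) with h' | h' <;> simp [h']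

lemma List.prod_map_range_two_mul {M : Type*} [Monoid M] (f : ℕ → M) (n : ℕ) :
    ((List.range (2 * n)).map f).prod =
      ((List.range n).map fun i => f (2 * i) * f (2 * i + 1)).prod := by
  induction n with
  | zero => simp
  | succ n ih =>
    rw [show 2 * (n + 1) = 2 * n + 1 + 1 by ring, List.range_succ, List.range_succ,
      List.range_succ]
    simp only [List.map_append, List.prod_append, ih, List.map_cons, List.map_nil,
      List.prod_cons, List.prod_nil, mul_one, mul_assoc]

namespace Polynomial

variable {R : Type*} [Semiring R]

lemma degree_lt_succ_of_natDegree_le {f : R[X]} {k : ℕ} (h : f.natDegree ≤ k) :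
    f.degree < ↑(k + 1) :=
  degree_le_natDegree.trans_lt (by exact_mod_cast Nat.lt_succ_of_le h)

lemma degree_eq_and_leadingCoeff_eq {f : R[X]} {k : ℕ} {s : R} (hf : f.natDegree ≤ k)
    (hc : f.coeff k = s) (hs : s ≠ 0) : f.degree = k ∧ f.leadingCoeff = s := by
  have hck : f.coeff k ≠ 0 := hc ▸ hs
  refine ⟨degree_eq_of_le_of_coeff_ne_zero (natDegree_le_iff_degree_le.mp hf) hck, ?_⟩
  rw [leadingCoeff, natDegree_eq_of_le_of_coeff_ne_zero hf hck, hc]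

end Polynomial

section LeadingRow

variable {R : Type*} [Semiring R]

def HasLeadingRow (M : Matrix (Fin 2) (Fin 2) R[X]) (k : ℕ) (s : R) : Prop :=
  (M 0 0).natDegree ≤ k ∧ (M 0 0).coeff k = s ∧ (M 0 1).degree < k

def IsLinearPair (Q : Matrix (Fin 2) (Fin 2) R[X]) (t : R) : Prop :=
  (Q 0 0).natDegree ≤ 1 ∧ (Q 0 0).coeff 1 = t ∧ (Q 0 1).natDegree = 0 ∧
    (Q 1 0).natDegree ≤ 1 ∧ (Q 1 1).natDegree = 0

lemma hasLeadingRow_one : HasLeadingRow (1 : Matrix (Fin 2) (Fin 2) R[X]) 0 1 := by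
  simp [HasLeadingRow]

lemma HasLeadingRow.mul {M Q : Matrix (Fin 2) (Fin 2) R[X]} {k : ℕ} {s t : R}
    (hM : HasLeadingRow M k s) (hQ : IsLinearPair Q t) :
    HasLeadingRow (M * Q) (k + 1) (s * t) := by
  obtain ⟨hM00, hcoeff, hM01⟩ := hM
  obtain ⟨hQ00, hQcoeff, hQ01, hQ10, hQ11⟩ := hQ
  have hM01' : (M 0 1).natDegree ≤ k := natDegree_le_iff_degree_le.mpr hM01.le
  have hM01k : (M 0 1).coeff k = 0 := coeff_eq_zero_of_degree_lt hM01
  simp only [HasLeadingRow, Matrix.mul_apply, Fin.sum_univ_two]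
  refine ⟨?_, ?_, ?_⟩
  · exact natDegree_add_le_of_degree_le (natDegree_mul_le_of_le hM00 hQ00)
      (natDegree_mul_le_of_le hM01' hQ10)
  · rw [coeff_add, coeff_mul_add_eq_of_natDegree_le hM00 hQ00,
      coeff_mul_add_eq_of_natDegree_le hM01' hQ10, hcoeff, hQcoeff, hM01k, zero_mul, add_zero]
  · refine degree_lt_succ_of_natDegree_le (natDegree_add_le_of_degree_le ?_ ?_)
    · simpa using natDegree_mul_le_of_le hM00 hQ01.le
    · simpa using natDegree_mul_le_of_le hM01' hQ11.le

lemma hasLeadingRow_list_prod (Q : ℕ → Matrix (Fin 2) (Fin 2) R[X]) (t : ℕ → R)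
    (hQ : ∀ i, IsLinearPair (Q i) (t i)) (n : ℕ) :
    HasLeadingRow ((List.range n).map Q).prod n ((List.range n).map t).prod := by
  induction n with
  | zero => simpa using hasLeadingRow_one
  | succ n ih =>
    simpa [List.range_succ] using ih.mul (hQ n)

lemma HasLeadingRow.sub_C_mul {R : Type*} [Ring R] {M : Matrix (Fin 2) (Fin 2) R[X]} {k : ℕ}
    {s : R} (h : HasLeadingRow M k s) (c : R) :
    (M 0 0 - C c * M 0 1).natDegree ≤ k ∧ (M 0 0 - C c * M 0 1).coeff k = s := by
  obtain ⟨h00, hcoeff, h01⟩ := h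
  refine ⟨?_, ?_⟩
  · simpa using natDegree_sub_le_of_le h00
      ((natDegree_C_mul_le c _).trans (natDegree_le_iff_degree_le.mpr h01.le))
  · rw [coeff_sub, coeff_C_mul, coeff_eq_zero_of_degree_lt h01, mul_zero, sub_zero, hcoeff]

end LeadingRow

section TwoBridge

variable {d : ℂ}

lemma eps_eq_one_or_neg_one (p : ℕ) (q : ℤ) (i : ℕ) : eps p q i = 1 ∨ eps p q i = -1 := by
  unfold eps
  split_ifs <;> simp

lemma G1_zpow (hd : d ≠ 0) {a : ℤ} (ha : a = 1 ∨ a = -1) :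
    G1 d ^ a = !![C (d ^ a), C (a : ℂ); 0, C (d ^ (-a))] := by
  rcases ha with rfl | rfl
  · simp [G1]
  · rw [Matrix.zpow_neg_one]
    refine Matrix.inv_eq_right_inv ?_
    rw [G1, Matrix.mul_fin_two, Matrix.one_fin_two]
    simp [← C_mul, hd]

lemma G2_zpow (hd : d ≠ 0) {b : ℤ} (hb : b = 1 ∨ b = -1) :
    G2 d ^ b = !![C (d ^ b), 0; -(C (b : ℂ) * X), C (d ^ (-b))] := by
  rcases hb with rfl | rfl
  · simp [G2]
  · rw [Matrix.zpow_neg_one]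
    refine Matrix.inv_eq_right_inv ?_
    rw [G2, Matrix.mul_fin_two, Matrix.one_fin_two]
    simp [← C_mul, hd]

lemma isLinearPair_G1_zpow_mul_G2_zpow (hd : d ≠ 0) {a b : ℤ} (ha : a = 1 ∨ a = -1)
    (hb : b = 1 ∨ b = -1) : IsLinearPair (G1 d ^ a * G2 d ^ b) (-(a * b : ℂ)) := by
  rw [G1_zpow hd ha, G2_zpow hd hb, Matrix.mul_fin_two]
  refine ⟨?_, ?_, ?_, ?_, ?_⟩ <;> simp only [Matrix.of_apply, Matrix.cons_val',
    Matrix.cons_val_zero, Matrix.cons_val_one, Matrix.empty_val', Matrix.cons_val_fin_one]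
  · compute_degree!
  · simp
  · rw [mul_zero, zero_add, ← C_mul, natDegree_C]
  · compute_degree!
  · rw [mul_zero, zero_add, ← C_mul, natDegree_C]

lemma twoBridgeW_eq_prod_pairs {p : ℕ} (q : ℤ) (hp : Odd p) :
    twoBridgeW p q d = ((List.range ((p - 1) / 2)).map fun i =>
      G1 d ^ eps p q (2 * i + 1) * G2 d ^ eps p q (2 * i + 2)).prod := by
  obtain ⟨m, rfl⟩ := hp
  rw [twoBridgeW, show 2 * m + 1 - 1 = 2 * m by omega, List.prod_map_range_two_mul,
    show 2 * m / 2 = m by omega]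
  refine congrArg List.prod (List.map_congr_left fun i _ => ?_)
  rw [if_pos (by omega), if_neg (by omega)]

lemma hasLeadingRow_twoBridgeW {p : ℕ} (q : ℤ) (hp : Odd p) (hd : d ≠ 0) :
    ∃ s : ℂ, (s = 1 ∨ s = -1) ∧ HasLeadingRow (twoBridgeW p q d) ((p - 1) / 2) s := by
  set t : ℕ → ℂ := fun i => -((eps p q (2 * i + 1) : ℂ) * eps p q (2 * i + 2))
  refine ⟨((List.range ((p - 1) / 2)).map t).prod, ?_, ?_⟩
  · refine List.prod_eq_one_or_neg_one fun x hx => ?_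
    obtain ⟨i, -, rfl⟩ := List.mem_map.mp hx
    rcases eps_eq_one_or_neg_one p q (2 * i + 1) with h | h <;>
      rcases eps_eq_one_or_neg_one p q (2 * i + 2) with h' | h' <;> simp [t, h, h']
  · rw [twoBridgeW_eq_prod_pairs q hp]
    exact hasLeadingRow_list_prod _ t (fun i => isLinearPair_G1_zpow_mul_G2_zpow hd
      (eps_eq_one_or_neg_one p q _) (eps_eq_one_or_neg_one p q _)) _

end TwoBridge

theorem stmt_10_general (p : ℕ) (q : ℤ) (hp : Odd p)
    (d : ℂ) (hd : d ≠ 0) :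
    (twoBridgeW p q d 0 0).degree = (((p - 1) / 2 : ℕ) : WithBot ℕ) ∧
    (rileyPoly p q d).degree = (((p - 1) / 2 : ℕ) : WithBot ℕ) ∧
    ((twoBridgeW p q d 0 0).leadingCoeff = 1 ∨
      (twoBridgeW p q d 0 0).leadingCoeff = -1) ∧
    ((rileyPoly p q d).leadingCoeff = 1 ∨ (rileyPoly p q d).leadingCoeff = -1) ∧
    (twoBridgeW p q d 0 0).leadingCoeff = (rileyPoly p q d).leadingCoeff := by
  obtain ⟨s, hs, hW⟩ := hasLeadingRow_twoBridgeW q hp hd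
  have hs0 : s ≠ 0 := by rcases hs with rfl | rfl <;> norm_num
  have hR : (rileyPoly p q d).natDegree ≤ (p - 1) / 2 ∧
      (rileyPoly p q d).coeff ((p - 1) / 2) = s := hW.sub_C_mul (d - d⁻¹)
  obtain ⟨degW, lcW⟩ := degree_eq_and_leadingCoeff_eq hW.1 hW.2.1 hs0
  obtain ⟨degR, lcR⟩ := degree_eq_and_leadingCoeff_eq hR.1 hR.2 hs0
  exact ⟨degW, degR, lcW ▸ hs, lcR ▸ hs, lcW.trans lcR.symm⟩

theorem stmt_10 (p : ℕ) (q : ℤ) (hp : Odd p) (hq : Odd q)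
    (hpq : IsCoprime (p : ℤ) q) (hp3 : 3 ≤ p)
    (hql : -(p : ℤ) < q) (hqu : q < (p : ℤ))
    (d : ℂ) (hd : d ≠ 0) :
    (twoBridgeW p q d 0 0).degree = (((p - 1) / 2 : ℕ) : WithBot ℕ) ∧
    (rileyPoly p q d).degree = (((p - 1) / 2 : ℕ) : WithBot ℕ) ∧
    ((twoBridgeW p q d 0 0).leadingCoeff = 1 ∨
      (twoBridgeW p q d 0 0).leadingCoeff = -1) ∧
    ((rileyPoly p q d).leadingCoeff = 1 ∨ (rileyPoly p q d).leadingCoeff = -1) ∧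
    (twoBridgeW p q d 0 0).leadingCoeff = (rileyPoly p q d).leadingCoeff :=
  stmt_10_general p q hp d hd
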